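/- arXiv:2602.15905 — 2 statements merged into one kernel-verified Lean document; each statement's English description precedes it below -/
import Mathlib

section
/- For every real x ≥ 1, N(x) ≥ x/(x+1) − H(x) + (exp(H(x))/(x+1))·(x/H(x) − log(H(x))). -/
open Real Filter Set Topology

/-- The digamma function `ψ(y) = Γ'(y)/Γ(y)`, i.e. the derivative of `log Γ`. -/
noncomputable def digamma (y : ℝ) : ℝ := deriv (fun t : ℝ => Real.log (Real.Gamma t)) y

/-- The continuous extension of the harmonic numbers: `H(x) = ψ(x+1) + γ`. -/
noncomputable def H (x : ℝ) : ℝ := digamma (x + 1) + Real.eulerMascheroniConstant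

/-- `L(x) = (H(x) + exp(H(x))·log(H(x)))/x`. -/
noncomputable def L (x : ℝ) : ℝ := (H x + Real.exp (H x) * Real.log (H x)) / x

/-- `N(x) = x·H'(x) − H(x) + exp(H(x))·((x·H'(x) − 1)·log(H(x)) + x·H'(x)/H(x))`. -/
noncomputable def N (x : ℝ) : ℝ :=
  x * deriv H x - H x +
    Real.exp (H x) * ((x * deriv H x - 1) * Real.log (H x) + x * deriv H x / H x)



section infra

private lemma gamma_arg_ne {t : ℝ} (ht : 0 < t) : ∀ m : ℕ, t ≠ -m := fun m =>
  ne_of_gt (lt_of_le_of_lt (neg_nonpos.mpr (Nat.cast_nonneg m)) ht)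

lemma logGamma_diffAt {t : ℝ} (ht : 0 < t) :
    DifferentiableAt ℝ (fun t : ℝ => Real.log (Real.Gamma t)) t :=
  (Real.differentiableAt_Gamma (gamma_arg_ne ht)).log (Real.Gamma_pos_of_pos ht).ne'

lemma derivGamma_diffAt {y : ℝ} (hy : 0 < y) : DifferentiableAt ℝ (deriv Real.Gamma) y := by
  have hU : IsOpen {s : ℂ | 0 < s.re} := isOpen_lt continuous_const Complex.continuous_re
  have harg : ∀ s : ℂ, 0 < s.re → ∀ m : ℕ, s ≠ -m := by
    intro s hs m h
    rw [h] at hs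
    simp only [Complex.neg_re, Complex.natCast_re] at hs
    have := Nat.cast_nonneg (α := ℝ) m
    linarith
  have hA : AnalyticOnNhd ℂ Complex.Gamma {s : ℂ | 0 < s.re} := by
    refine DifferentiableOn.analyticOnNhd (fun s hs => ?_) hU
    exact (Complex.differentiableAt_Gamma s (harg s hs)).differentiableWithinAt
  have hA' := hA.deriv
  have key : ∀ t : ℝ, 0 < t → deriv Real.Gamma t = (deriv Complex.Gamma t).re := by
    intro t ht
    have hd : DifferentiableAt ℂ Complex.Gamma t :=
      Complex.differentiableAt_Gamma _ (harg _ (by simpa using ht))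
    have h2 := hd.hasDerivAt.real_of_complex
    have heq : (fun x : ℝ => (Complex.Gamma ↑x).re) = Real.Gamma := by
      funext x; rw [Complex.Gamma_ofReal, Complex.ofReal_re]
    rw [heq] at h2
    exact h2.deriv
  have hEv : (fun t : ℝ => (deriv Complex.Gamma ↑t).re) =ᶠ[𝓝 y] deriv Real.Gamma := by
    filter_upwards [eventually_gt_nhds hy] with t ht
    exact (key t ht).symm
  have hdiff2 : DifferentiableAt ℝ (fun t : ℝ => (deriv Complex.Gamma ↑t).re) y := by
    have h1 : DifferentiableAt ℂ (deriv Complex.Gamma) ↑y :=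
      (hA' ↑y (by simpa using hy)).differentiableAt
    exact h1.hasDerivAt.real_of_complex.differentiableAt
  exact hdiff2.congr_of_eventuallyEq hEv.symm

lemma digamma_diffAt {y : ℝ} (hy : 0 < y) : DifferentiableAt ℝ digamma y := by
  have hq : DifferentiableAt ℝ (fun t => deriv Real.Gamma t / Real.Gamma t) y :=
    (derivGamma_diffAt hy).div (Real.differentiableAt_Gamma (gamma_arg_ne hy))
      (Real.Gamma_pos_of_pos hy).ne'
  refine hq.congr_of_eventuallyEq ?_
  filter_upwards [eventually_gt_nhds hy] with t ht
  show deriv (fun t : ℝ => Real.log (Real.Gamma t)) t = _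
  rw [deriv.log (Real.differentiableAt_Gamma (gamma_arg_ne ht)) (Real.Gamma_pos_of_pos ht).ne']

lemma digamma_rec {y : ℝ} (hy : 0 < y) : digamma (y + 1) = digamma y + 1 / y := by
  simp only [digamma]
  rw [← deriv_comp_add_const, one_div, ← Real.deriv_log,
    ← deriv_add (logGamma_diffAt hy) (Real.differentiableAt_log hy.ne')]
  apply Filter.EventuallyEq.deriv_eq
  filter_upwards [eventually_gt_nhds hy] with t ht
  rw [Real.Gamma_add_one ht.ne', Real.log_mul ht.ne' (Real.Gamma_pos_of_pos ht).ne']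
  simp only [Pi.add_apply]
  ring

lemma digamma_lb {t : ℝ} (ht : 1 < t) : Real.log (t - 1) ≤ digamma t := by
  have hc : ConvexOn ℝ (Ioi 0) (fun t : ℝ => Real.log (Real.Gamma t)) := by
    simpa [Function.comp_def] using Real.convexOn_log_Gamma
  have h := hc.slope_le_deriv (mem_Ioi.mpr (by linarith : (0:ℝ) < t - 1))
    (mem_Ioi.mpr (by linarith : (0:ℝ) < t)) (by linarith) (logGamma_diffAt (by linarith))
  rw [slope_def_field] at h
  have hrec : Real.log (Real.Gamma t) = Real.log (Real.Gamma (t-1)) + Real.log (t-1) := by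
    rw [show t = (t-1) + 1 by ring, Real.Gamma_add_one (by linarith),
      Real.log_mul (by linarith) (Real.Gamma_pos_of_pos (by linarith)).ne']
    ring_nf
  simp only [digamma]
  calc Real.log (t-1)
      = ((fun t : ℝ => Real.log (Real.Gamma t)) t - (fun t : ℝ => Real.log (Real.Gamma t)) (t-1))
        / (t - (t-1)) := by simp only []; rw [hrec]; ring_nf
    _ ≤ deriv (fun t : ℝ => Real.log (Real.Gamma t)) t := h

lemma digamma_ub {t : ℝ} (ht : 0 < t) : digamma t ≤ Real.log t := by
  have hc : ConvexOn ℝ (Ioi 0) (fun t : ℝ => Real.log (Real.Gamma t)) := by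
    simpa [Function.comp_def] using Real.convexOn_log_Gamma
  have h := hc.deriv_le_slope (mem_Ioi.mpr ht)
    (mem_Ioi.mpr (by linarith : (0:ℝ) < t + 1)) (by linarith) (logGamma_diffAt ht)
  rw [slope_def_field] at h
  have hrec : Real.log (Real.Gamma (t+1)) = Real.log (Real.Gamma t) + Real.log t := by
    rw [Real.Gamma_add_one ht.ne', Real.log_mul ht.ne' (Real.Gamma_pos_of_pos ht).ne']
    ring
  simp only [digamma]
  calc deriv (fun t : ℝ => Real.log (Real.Gamma t)) t
      ≤ ((fun t : ℝ => Real.log (Real.Gamma t)) (t+1) - (fun t : ℝ => Real.log (Real.Gamma t)) t)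
        / (t + 1 - t) := h
    _ = Real.log t := by simp only []; rw [hrec]; ring_nf

end infra

lemma digamma_add_nat {y : ℝ} (hy : 0 < y) (n : ℕ) :
    digamma (y + (n + 1)) = digamma y + ∑ k ∈ Finset.range (n + 1), 1 / (y + k) := by
  induction n with
  | zero => simpa using digamma_rec hy
  | succ n ih =>
      have harg : y + (((n+1:ℕ):ℝ) + 1) = (y + ((n:ℝ) + 1)) + 1 := by push_cast; ring
      rw [harg, digamma_rec (by positivity), Finset.sum_range_succ, ih]
      push_cast
      ring

lemma digamma_tendsto {y : ℝ} (hy : 0 < y) :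
    Tendsto (fun n : ℕ => Real.log n - ∑ k ∈ Finset.range (n + 1), 1 / (y + k)) atTop
      (𝓝 (digamma y)) := by
  have key : Tendsto (fun n : ℕ => digamma (y + (n + 1)) - Real.log n) atTop (𝓝 0) := by
    have hlo : Tendsto (fun n : ℕ => Real.log ((y + n) / n)) atTop (𝓝 0) := by
      have h2 : Tendsto (fun n : ℕ => (y + n) / n) atTop (𝓝 1) := by
        have h1 : Tendsto (fun n : ℕ => y / n + 1) atTop (𝓝 (0 + 1)) :=
          (tendsto_const_div_atTop_nhds_zero_nat y).add tendsto_const_nhds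
        rw [zero_add] at h1
        refine h1.congr' ?_
        filter_upwards [eventually_gt_atTop 0] with n hn
        have : (n:ℝ) ≠ 0 := by positivity
        field_simp
      simpa [Function.comp_def] using (Real.continuousAt_log one_ne_zero).tendsto.comp h2
    have hhi : Tendsto (fun n : ℕ => Real.log ((y + n + 1) / n)) atTop (𝓝 0) := by
      have h2 : Tendsto (fun n : ℕ => (y + n + 1) / n) atTop (𝓝 1) := by
        have h1 : Tendsto (fun n : ℕ => (y + 1) / n + 1) atTop (𝓝 (0 + 1)) :=
          (tendsto_const_div_atTop_nhds_zero_nat (y + 1)).add tendsto_const_nhds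
        rw [zero_add] at h1
        refine h1.congr' ?_
        filter_upwards [eventually_gt_atTop 0] with n hn
        have : (n:ℝ) ≠ 0 := by positivity
        field_simp
        ring
      simpa [Function.comp_def] using (Real.continuousAt_log one_ne_zero).tendsto.comp h2
    refine tendsto_of_tendsto_of_tendsto_of_le_of_le' hlo hhi ?_ ?_
    · filter_upwards [eventually_ge_atTop 1] with n hn
      have hn' : (1:ℝ) ≤ n := by exact_mod_cast hn
      rw [Real.log_div (by positivity) (by positivity)]
      have h3 := digamma_lb (t := y + ((n:ℝ) + 1)) (by linarith)
      have he : y + ((n:ℝ) + 1) - 1 = y + n := by ring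
      rw [he] at h3
      linarith
    · filter_upwards [eventually_ge_atTop 1] with n hn
      have hn' : (1:ℝ) ≤ n := by exact_mod_cast hn
      rw [Real.log_div (by positivity) (by positivity)]
      have he : y + ((n:ℝ) + 1) = y + n + 1 := by ring
      have h3 : digamma (y + ((n:ℝ) + 1)) ≤ Real.log (y + (n:ℝ) + 1) := by
        rw [he]; exact digamma_ub (by positivity)
      linarith
  have h4 : Tendsto (fun n : ℕ => digamma y - (digamma (y + (n + 1)) - Real.log n)) atTop
      (𝓝 (digamma y - 0)) := tendsto_const_nhds.sub key
  rw [sub_zero] at h4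
  refine h4.congr fun n => ?_
  rw [digamma_add_nat hy n]
  ring

lemma pos_comb {u v p q : ℝ} (hu : 0 < u) (hv : 0 < v) (hp : 0 ≤ p) (hq : 0 ≤ q)
    (hpq : p + q = 1) : 0 < p * u + q * v := by
  rcases le_total p (1/2) with h | h
  · nlinarith [mul_nonneg hp hu.le]
  · nlinarith [mul_nonneg hq hv.le]

lemma inv_convex_aux {u v p q : ℝ} (hu : 0 < u) (hv : 0 < v) (hp : 0 ≤ p) (hq : 0 ≤ q)
    (hpq : p + q = 1) : 1 / (p * u + q * v) ≤ p / u + q / v := by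
  have hc : 0 < p * u + q * v := pos_comb hu hv hp hq hpq
  rw [div_add_div _ _ hu.ne' hv.ne', div_le_div_iff₀ hc (by positivity)]
  have hq' : q = 1 - p := by linarith
  subst hq'
  nlinarith [mul_nonneg (mul_nonneg hp (by linarith : (0:ℝ) ≤ 1 - p)) (sq_nonneg (u - v))]

lemma digamma_concaveOn : ConcaveOn ℝ (Ioi 0) digamma := by
  constructor
  · exact convex_Ioi 0
  · intro a ha b hb p q hp hq hpq
    rw [Set.mem_Ioi] at ha hb
    simp only [smul_eq_mul]
    have hc : 0 < p * a + q * b := pos_comb ha hb hp hq hpq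
    have hta := digamma_tendsto ha
    have htb := digamma_tendsto hb
    have htc := digamma_tendsto hc
    have hcomb : Tendsto (fun n : ℕ => p * (Real.log n - ∑ k ∈ Finset.range (n+1), 1/(a+k))
        + q * (Real.log n - ∑ k ∈ Finset.range (n+1), 1/(b+k))) atTop
        (𝓝 (p * digamma a + q * digamma b)) := (hta.const_mul p).add (htb.const_mul q)
    refine le_of_tendsto_of_tendsto hcomb htc ?_
    filter_upwards with n
    have hterm : ∀ k ∈ Finset.range (n+1),
        1 / (p * a + q * b + (k:ℝ)) ≤ p * (1 / (a + k)) + q * (1 / (b + k)) := by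
      intro k _
      have h := inv_convex_aux (u := a + k) (v := b + k) (by positivity) (by positivity) hp hq hpq
      have he : p * (a + (k:ℝ)) + q * (b + k) = p * a + q * b + k := by nlinarith
      rw [he] at h
      calc 1 / (p * a + q * b + (k:ℝ)) ≤ p / (a+k) + q / (b+k) := h
        _ = p * (1 / (a + k)) + q * (1 / (b + k)) := by ring
    have hsum := Finset.sum_le_sum hterm
    have hsplit : ∑ k ∈ Finset.range (n+1), (p * (1/(a+(k:ℝ))) + q * (1/(b+(k:ℝ))))
        = p * ∑ k ∈ Finset.range (n+1), 1/(a+(k:ℝ))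
          + q * ∑ k ∈ Finset.range (n+1), 1/(b+(k:ℝ)) := by
      rw [Finset.sum_add_distrib, ← Finset.mul_sum, ← Finset.mul_sum]
    rw [hsplit] at hsum
    have hl : p * Real.log n + q * Real.log n = Real.log n := by
      rw [← add_mul, hpq, one_mul]
    show _ ≤ Real.log n - ∑ k ∈ Finset.range (n+1), 1/(p * a + q * b + (k:ℝ))
    nlinarith [hsum]

lemma trigamma_ge {y : ℝ} (hy : 0 < y) : 1 / y ≤ deriv digamma y := by
  have h := digamma_concaveOn.slope_le_deriv (Set.mem_Ioi.mpr hy)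
    (Set.mem_Ioi.mpr (by linarith : (0:ℝ) < y + 1)) (by linarith) (digamma_diffAt hy)
  rw [slope_def_field, digamma_rec hy] at h
  calc 1/y = (digamma y + 1/y - digamma y) / (y + 1 - y) := by
        rw [show y + 1 - y = (1:ℝ) by ring]; ring
    _ ≤ deriv digamma y := h

lemma digamma_mono {s t : ℝ} (hs : 0 < s) (hst : s ≤ t) : digamma s ≤ digamma t := by
  rcases eq_or_lt_of_le hst with h | h
  · rw [h]
  · have ht : 0 < t := lt_trans hs h
    have hc : ConvexOn ℝ (Ioi 0) (fun t : ℝ => Real.log (Real.Gamma t)) := by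
      simpa [Function.comp_def] using Real.convexOn_log_Gamma
    have h1 := hc.deriv_le_slope (Set.mem_Ioi.mpr hs) (Set.mem_Ioi.mpr ht) h
      (logGamma_diffAt hs)
    have h2 := hc.slope_le_deriv (Set.mem_Ioi.mpr hs) (Set.mem_Ioi.mpr ht) h
      (logGamma_diffAt ht)
    exact le_trans h1 h2

lemma digamma_one : digamma 1 = -Real.eulerMascheroniConstant := by
  have hd : DifferentiableAt ℝ Real.Gamma 1 := Real.differentiableAt_Gamma (gamma_arg_ne one_pos)
  show deriv (fun t : ℝ => Real.log (Real.Gamma t)) 1 = _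
  rw [deriv.log hd (by rw [Real.Gamma_one]; norm_num), Real.hasDerivAt_Gamma_one.deriv,
    Real.Gamma_one, div_one]

lemma digamma_two : digamma 2 = 1 - Real.eulerMascheroniConstant := by
  rw [show (2:ℝ) = 1 + 1 by norm_num, digamma_rec one_pos, digamma_one]
  ring

lemma H_ge_one {x : ℝ} (hx : 1 ≤ x) : 1 ≤ H x := by
  have h1 : digamma 2 ≤ digamma (x + 1) := digamma_mono two_pos (by linarith)
  rw [digamma_two] at h1
  simp only [H]
  linarith

lemma deriv_H_eq (x : ℝ) : deriv H x = deriv digamma (x + 1) := by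
  have hHe : H = fun x => digamma (x + 1) + Real.eulerMascheroniConstant := rfl
  rw [hHe, deriv_add_const, deriv_comp_add_const]

theorem N_lower_bound (x : ℝ) (hx : 1 ≤ x) :
    x / (x + 1) - H x + Real.exp (H x) / (x + 1) * (x / H x - Real.log (H x)) ≤ N x := by
  have hx1 : (0:ℝ) < x + 1 := by linarith
  have hH1 : 1 ≤ H x := H_ge_one hx
  have hH0 : 0 < H x := by linarith
  have hlog : 0 ≤ Real.log (H x) := Real.log_nonneg hH1
  have hD : 1 / (x + 1) ≤ deriv H x := by
    rw [deriv_H_eq]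
    exact trigamma_ge hx1
  have hE : 0 < Real.exp (H x) := Real.exp_pos _
  have key : N x - (x / (x + 1) - H x + Real.exp (H x) / (x + 1) * (x / H x - Real.log (H x)))
      = x * (deriv H x - 1 / (x + 1)) *
        (1 + Real.exp (H x) * Real.log (H x) + Real.exp (H x) / H x) := by
    simp only [N]
    field_simp
    ring
  have h2 : 0 ≤ 1 + Real.exp (H x) * Real.log (H x) + Real.exp (H x) / H x := by
    have := mul_nonneg hE.le hlog
    have : 0 ≤ Real.exp (H x) / H x := by positivity
    linarith [mul_nonneg hE.le hlog]
  have h3 : 0 ≤ x * (deriv H x - 1 / (x + 1)) *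
      (1 + Real.exp (H x) * Real.log (H x) + Real.exp (H x) / H x) := by
    apply mul_nonneg (mul_nonneg (by linarith) (by linarith)) h2
  linarith [key, h3]
end

section
/- For every integer n ≥ 55, B_{n+1} > B_n, where B_n := (H_n + exp(H_n)·log(H_n))/n. -/
open Real Finset

/-- The n-th harmonic number `H_n = ∑_{j=1}^n 1/j` as a real number. -/
noncomputable def harmonicNum (n : ℕ) : ℝ := ∑ j ∈ Finset.range n, (1 : ℝ) / (j + 1)

/-- The sequence `B_n = (H_n + exp(H_n)·log(H_n))/n`. -/
noncomputable def B (n : ℕ) : ℝ :=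
  (harmonicNum n + Real.exp (harmonicNum n) * Real.log (harmonicNum n)) / n

lemma harmonicNum_eq (n : ℕ) : harmonicNum n = (harmonic n : ℝ) := by
  simp [harmonicNum, harmonic, one_div]

lemma harmonicNum_succ (n : ℕ) : harmonicNum (n+1) = harmonicNum n + 1/((n:ℝ)+1) := by
  simp [harmonicNum, Finset.sum_range_succ]

lemma exp_four_gt : (54 : ℝ) < Real.exp 4 := by
  have h : Real.exp 4 = (Real.exp 1)^(4:ℕ) := by
    rw [← Real.exp_nat_mul]; norm_num
  have h1 := Real.exp_one_gt_d9
  rw [h]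
  calc (54:ℝ) < 2.7182818283^(4:ℕ) := by norm_num
    _ ≤ (Real.exp 1)^(4:ℕ) := by
        apply pow_le_pow_left₀ (by norm_num) h1.le

lemma exp_four_lt : Real.exp 4 < (55 : ℝ) := by
  have h : Real.exp 4 = (Real.exp 1)^(4:ℕ) := by
    rw [← Real.exp_nat_mul]; norm_num
  have h1 := Real.exp_one_lt_d9
  rw [h]
  calc (Real.exp 1)^(4:ℕ) ≤ 2.7182818286^(4:ℕ) := by
        apply pow_le_pow_left₀ (Real.exp_pos 1).le h1.le
    _ < 55 := by norm_num

lemma exp_ge_quad {x : ℝ} (hx : 4 ≤ x) : (26/10) * x^2 ≤ Real.exp x := by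
  have h1 : Real.exp x = Real.exp 4 * Real.exp (x - 4) := by
    rw [← Real.exp_add]; ring_nf
  have h2 : Real.exp (x-4) = (Real.exp ((x-4)/2))^2 := by
    rw [sq, ← Real.exp_add]; ring_nf
  have h3 : 1 + (x-4)/2 ≤ Real.exp ((x-4)/2) := by
    linarith [Real.add_one_le_exp ((x-4)/2)]
  have h4 : (0:ℝ) ≤ 1 + (x-4)/2 := by linarith
  have h5 : (1 + (x-4)/2)^2 ≤ (Real.exp ((x-4)/2))^2 := by
    exact pow_le_pow_left₀ h4 h3 2
  have h6 := exp_four_gt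
  rw [h1, h2]
  nlinarith [Real.exp_pos ((x-4)/2), sq_nonneg (x-4)]

lemma log_le_div_e {x : ℝ} (hx : 0 < x) : Real.exp 1 * Real.log x ≤ x := by
  have h : Real.log (x / Real.exp 1) ≤ x / Real.exp 1 - 1 :=
    Real.log_le_sub_one_of_pos (by positivity)
  rw [Real.log_div (ne_of_gt hx) (ne_of_gt (Real.exp_pos 1)), Real.log_exp] at h
  have he := Real.exp_pos 1
  have h2 : Real.log x ≤ x / Real.exp 1 := by linarith
  calc Real.exp 1 * Real.log x ≤ Real.exp 1 * (x / Real.exp 1) :=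
        mul_le_mul_of_nonneg_left h2 he.le
    _ = x := by field_simp

set_option maxHeartbeats 1000000 in
theorem B_increasing_from_55 (n : ℕ) (hn : 55 ≤ n) : B n < B (n + 1) := by
  set H := harmonicNum n with hH
  set N : ℝ := (n : ℝ) with hNdef
  have hN55 : (55:ℝ) ≤ N := by rw [hNdef]; exact_mod_cast hn
  have hN0 : (0:ℝ) < N := by linarith
  have hN10 : (0:ℝ) < N + 1 := by linarith
  set δ : ℝ := 1/(N+1) with hδdef
  have hδ0 : 0 < δ := by positivity
  have hδ56 : δ ≤ 1/56 := by
    rw [hδdef, div_le_div_iff₀ hN10 (by norm_num)]; linarith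
  have hδN : δ * (N+1) = 1 := by rw [hδdef]; field_simp
  -- bounds on H
  have hHlow : Real.log (N+1) ≤ H := by
    rw [hH, harmonicNum_eq]
    have := log_add_one_le_harmonic n
    push_cast at this ⊢
    exact this
  have hHhigh : H ≤ 1 + Real.log N := by
    rw [hH, harmonicNum_eq]
    exact harmonic_le_one_add_log n
  have hlog56 : (4:ℝ) ≤ Real.log (N+1) := by
    rw [show (4:ℝ) = Real.log (Real.exp 4) by rw [Real.log_exp]]
    exact Real.log_le_log (Real.exp_pos 4) (by linarith [exp_four_lt])
  have hH4 : (4:ℝ) ≤ H := le_trans hlog56 hHlow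
  have hH0 : (0:ℝ) < H := by linarith
  set E : ℝ := Real.exp H with hE
  set L : ℝ := Real.log H with hL
  have hE0 : 0 < E := Real.exp_pos H
  have hL0 : 0 < L := Real.log_pos (by linarith)
  have hEge : N + 1 ≤ E := by
    calc N + 1 = Real.exp (Real.log (N+1)) := (Real.exp_log hN10).symm
      _ ≤ E := Real.exp_le_exp.mpr hHlow
  have hEle : E ≤ Real.exp 1 * N := by
    calc E ≤ Real.exp (1 + Real.log N) := Real.exp_le_exp.mpr hHhigh
      _ = Real.exp 1 * N := by rw [Real.exp_add, Real.exp_log hN0]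
  have heL : Real.exp 1 * L ≤ H := log_le_div_e hH0
  have hEL : E * L ≤ N * H := by
    calc E * L ≤ (Real.exp 1 * N) * L := mul_le_mul_of_nonneg_right hEle hL0.le
      _ = N * (Real.exp 1 * L) := by ring
      _ ≤ N * H := mul_le_mul_of_nonneg_left heL hN0.le
  have hEquad : (26/10) * H^2 ≤ E := exp_ge_quad hH4
  -- t1
  have hNδ : N * δ ≤ 1 := by
    rw [hδdef, mul_one_div, div_le_one hN10]; linarith
  have t1 : E * δ * L ≤ H := by
    have h2 : (E*L)*δ ≤ (N*H)*δ := mul_le_mul_of_nonneg_right hEL hδ0.le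
    have h4 : H*(N*δ) ≤ H*1 := mul_le_mul_of_nonneg_left hNδ hH0.le
    calc E*δ*L = (E*L)*δ := by ring
      _ ≤ (N*H)*δ := h2
      _ = H*(N*δ) := by ring
      _ ≤ H := by linarith
  -- t2
  have hHδ0 : 0 < H + δ := by linarith
  set u : ℝ := δ/(H+δ) with hu
  have hu0 : 0 < u := by positivity
  have huδ : u * (H+δ) = δ := by
    rw [hu]; field_simp
  have t2 : (203/100) * H ≤ E * u * (N+1-δ) := by
    have h1 : (N+1-δ)*δ = 1 - δ^2 := by nlinarith [hδN]
    have ha : (55:ℝ)/56 ≤ 1 - δ^2 := by nlinarith [hδ56, hδ0.le]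
    have hb : H + δ ≤ (5/4)*H := by linarith
    have h2 : (203/100)*H*(H+δ) ≤ E * (1 - δ^2) := by
      nlinarith [hEquad, ha, hb, hE0.le, hH0.le, sq_nonneg H]
    have h3 : E * u * (N+1-δ) * (H+δ) = E * (1-δ^2) := by
      calc E * u * (N+1-δ) * (H+δ) = E * (N+1-δ) * (u * (H+δ)) := by ring
        _ = E * (N+1-δ) * δ := by rw [huδ]
        _ = E * (1-δ^2) := by rw [mul_assoc, h1]
    have h5 : (203/100)*H*(H+δ) ≤ E * u * (N+1-δ) * (H+δ) := h2.trans_eq h3.symm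
    exact (mul_le_mul_iff_of_pos_right hHδ0).mp h5
  -- lower bound on f(H+δ)
  have hexp' : E * (1+δ) ≤ Real.exp (H+δ) := by
    rw [Real.exp_add]
    exact mul_le_mul_of_nonneg_left (by linarith [Real.add_one_le_exp δ]) hE0.le
  have hlog' : L + u ≤ Real.log (H+δ) := by
    have h := Real.log_le_sub_one_of_pos (show 0 < H/(H+δ) by positivity)
    rw [Real.log_div (ne_of_gt hH0) (ne_of_gt hHδ0)] at h
    have : H/(H+δ) - 1 = -u := by rw [hu]; field_simp; ring
    rw [this] at h
    linarith
  have hfH' : H + δ + E*(1+δ)*(L+u) ≤ (H+δ) + Real.exp (H+δ) * Real.log (H+δ) := by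
    have hp1 : 0 < E*(1+δ) := by positivity
    have hp2 : 0 < L + u := by positivity
    have := mul_le_mul hexp' hlog' hp2.le (Real.exp_pos (H+δ)).le
    linarith
  -- key arithmetic
  have hδN2 : δ * N = 1 - δ := by linear_combination hδN
  have e1 : E*L*(δ*N) = E*L*(1-δ) := by rw [hδN2]
  have e2 : E*u*(δ*N) = E*u*(1-δ) := by rw [hδN2]
  have key : (H + E*L)*(N+1) < (H + δ + E*(1+δ)*(L+u))*N := by
    nlinarith [t1, t2, e1, e2, mul_pos hδ0 hN0, hH0]
  -- assemble
  have hBn : B n = (H + E*L)/N := by rw [B]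
  have hBn1 : B (n+1) = (H + δ + Real.exp (H+δ) * Real.log (H+δ))/(N+1) := by
    rw [B, harmonicNum_succ]
    push_cast
    rw [← hH, ← hNdef, ← hδdef]
  rw [hBn, hBn1, div_lt_div_iff₀ hN0 hN10]
  calc (H+E*L)*(N+1) < (H + δ + E*(1+δ)*(L+u))*N := key
    _ ≤ (H + δ + Real.exp (H+δ) * Real.log (H+δ))*N :=
        mul_le_mul_of_nonneg_right hfH' hN0.le
end
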